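/- arXiv:2509.07608 — 2 statements merged into one kernel-verified Lean document; each statement's English description precedes it below -/
import Mathlib

section
/- If w : (0,1) → ℝ is differentiable, positive, satisfies the equation t(1-t) w'(t) = (1-4t) w(t) + 4π (1-t)^2 t^2 for all t ∈ (0,1), and lim_{t→0+} w(t)/t = 0, then w(t) = 4π t^2 (1-t)^2 for all t ∈ (0,1). -/
open Real Filter

theorem stmt_6 (w : ℝ → ℝ)
    (hdiff : ∀ t ∈ Set.Ioo (0 : ℝ) 1, DifferentiableAt ℝ w t)
    (hpos : ∀ t ∈ Set.Ioo (0 : ℝ) 1, 0 < w t)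
    (heq : ∀ t ∈ Set.Ioo (0 : ℝ) 1,
      t * (1 - t) * deriv w t = (1 - 4 * t) * w t + 4 * π * (1 - t) ^ 2 * t ^ 2)
    (hlim : Tendsto (fun t => w t / t) (nhdsWithin 0 (Set.Ioi 0)) (nhds 0)) :
    ∀ t ∈ Set.Ioo (0 : ℝ) 1, w t = 4 * π * t ^ 2 * (1 - t) ^ 2 := by
  set g : ℝ → ℝ := fun t => w t / (t * (1 - t) ^ 3) - 4 * π / (1 - t) with hg
  have hD : ∀ t ∈ Set.Ioo (0 : ℝ) 1, t * (1 - t) ^ 3 ≠ 0 := by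
    intro t ht
    have h1 : 0 < t := ht.1
    have h2 : (0:ℝ) < 1 - t := by linarith [ht.2]
    positivity
  have key : ∀ t ∈ Set.Ioo (0 : ℝ) 1, HasDerivAt g 0 t := by
    intro t ht
    obtain ⟨h1, h2⟩ := ht
    have ht1 : (1 : ℝ) - t ≠ 0 := by linarith
    have hw : HasDerivAt w (deriv w t) t := (hdiff t ⟨h1, h2⟩).hasDerivAt
    have hd1 : HasDerivAt (fun t : ℝ => t * (1 - t) ^ 3)
        ((1 - t) ^ 3 + t * (3 * (1 - t) ^ 2 * (-1))) t := by
      have : HasDerivAt (fun t : ℝ => (1 - t) ^ 3) (3 * (1 - t) ^ 2 * (-1)) t := by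
        have h0 : HasDerivAt (fun t : ℝ => 1 - t) (-1) t := by
          simpa using (hasDerivAt_id t).const_sub 1
        simpa using h0.fun_pow 3
      simpa using (hasDerivAt_id t).fun_mul this
    have hd2 : HasDerivAt (fun t : ℝ => 4 * π / (1 - t)) (-(4 * π * (-1)) / (1 - t) ^ 2) t := by
      have h0 : HasDerivAt (fun t : ℝ => 1 - t) (-1) t := by
        simpa using (hasDerivAt_id t).const_sub 1
      simpa using (hasDerivAt_const t (4 * π)).fun_div h0 ht1
    have hq : HasDerivAt g
        ((deriv w t * (t * (1 - t) ^ 3) - w t * ((1 - t) ^ 3 + t * (3 * (1 - t) ^ 2 * (-1)))) /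
          (t * (1 - t) ^ 3) ^ 2 - -(4 * π * (-1)) / (1 - t) ^ 2) t :=
      (hw.div hd1 (hD t ⟨h1, h2⟩)).sub hd2
    convert hq using 1
    have hode := heq t ⟨h1, h2⟩
    have ht0 : t ≠ 0 := ne_of_gt h1
    field_simp
    linear_combination (-1) * hode
  -- g is constant on Ioo 0 1
  have hconst : ∀ t ∈ Set.Ioo (0 : ℝ) 1, g t = g (1/2) := by
    intro t ht
    have hopen : IsOpen (Set.Ioo (0 : ℝ) 1) := isOpen_Ioo
    refine (convex_Ioo (0 : ℝ) 1).is_const_of_fderivWithin_eq_zero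
      (fun x hx => ((key x hx).differentiableAt).differentiableWithinAt) ?_ ht (by norm_num)
    intro x hx
    rw [fderivWithin_of_isOpen hopen hx]
    ext
    simp [← toSpanSingleton_deriv, (key x hx).deriv]
  -- limit of g at 0 within Ioi 0 is -4π
  have hmem : Set.Ioo (0 : ℝ) 1 ∈ nhdsWithin (0 : ℝ) (Set.Ioi 0) := by
    apply mem_nhdsWithin.mpr
    exact ⟨Set.Iio 1, isOpen_Iio, by norm_num, by
      intro x hx
      exact ⟨hx.2, hx.1⟩⟩
  have hglim : Tendsto g (nhdsWithin 0 (Set.Ioi 0)) (nhds (0 * (1 - 0)⁻¹ ^ 3 - 4 * π / (1 - 0))) := by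
    have h3 : Tendsto (fun t : ℝ => (1 - t)⁻¹ ^ 3) (nhdsWithin 0 (Set.Ioi 0))
        (nhds ((1 - 0)⁻¹ ^ 3)) := by
      apply Tendsto.mono_left _ nhdsWithin_le_nhds
      have : ContinuousAt (fun t : ℝ => (1 - t)⁻¹ ^ 3) 0 := by
        apply ContinuousAt.pow
        exact ContinuousAt.inv₀ (by fun_prop) (by norm_num)
      exact this.tendsto
    have h4 : Tendsto (fun t : ℝ => 4 * π / (1 - t)) (nhdsWithin 0 (Set.Ioi 0))
        (nhds (4 * π / (1 - 0))) := by
      apply Tendsto.mono_left _ nhdsWithin_le_nhds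
      exact (ContinuousAt.div continuousAt_const (by fun_prop) (by norm_num)).tendsto
    have := ((hlim.mul h3).sub h4)
    apply this.congr'
    filter_upwards [hmem] with t ht
    have ht0 : t ≠ 0 := ne_of_gt ht.1
    have ht1 : (1 : ℝ) - t ≠ 0 := by
      have := ht.2; intro h; linarith
    simp only [hg]
    field_simp
  have hglim' : Tendsto g (nhdsWithin 0 (Set.Ioi 0)) (nhds (g (1/2))) := by
    apply Tendsto.congr' _ tendsto_const_nhds
    filter_upwards [hmem] with t ht
    exact (hconst t ht).symm
  have hEq : g (1/2) = 0 * (1 - 0)⁻¹ ^ 3 - 4 * π / (1 - 0) :=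
    tendsto_nhds_unique hglim' hglim
  intro t ht
  have hgt := (hconst t ht).trans hEq
  have ht0 : t ≠ 0 := ne_of_gt ht.1
  have ht1 : (1 : ℝ) - t ≠ 0 := by
    have := ht.2; intro h; linarith
  simp only [hg] at hgt
  field_simp at hgt
  have h2 : w t * (1 - t) = 4 * π * t ^ 2 * (1 - t) ^ 2 * (1 - t) := by
    linear_combination (1 - t) * hgt
  exact mul_right_cancel₀ ht1 h2
end

section
/- Pointwise linear-algebra version of the Hessian inequality: if A is a symmetric 3×3 real matrix with trace zero, then |A|² (Frobenius norm squared) ≥ (3/2)(A₁₁² + A₁₂² + A₁₃²), with equality if and only if A₁₂ = A₁₃ = A₂₃ = 0 and A₂₂ = A₃₃ = -A₁₁/2. -/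
theorem stmt_9 (A : Matrix (Fin 3) (Fin 3) ℝ) (hsymm : A.IsSymm)
    (htr : A 0 0 + A 1 1 + A 2 2 = 0) :
    (∑ i : Fin 3, ∑ j : Fin 3, (A i j) ^ 2 ≥
        (3 / 2) * ((A 0 0) ^ 2 + (A 0 1) ^ 2 + (A 0 2) ^ 2)) ∧
      (∑ i : Fin 3, ∑ j : Fin 3, (A i j) ^ 2 =
          (3 / 2) * ((A 0 0) ^ 2 + (A 0 1) ^ 2 + (A 0 2) ^ 2) ↔
        A 0 1 = 0 ∧ A 0 2 = 0 ∧ A 1 2 = 0 ∧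
          A 1 1 = -A 0 0 / 2 ∧ A 2 2 = -A 0 0 / 2) := by
  have h10 : A 1 0 = A 0 1 := hsymm.apply 0 1
  have h20 : A 2 0 = A 0 2 := hsymm.apply 0 2
  have h21 : A 2 1 = A 1 2 := hsymm.apply 1 2
  have ha : A 0 0 = -(A 1 1 + A 2 2) := by linarith
  have hsq : A 0 0 ^ 2 = (A 1 1 + A 2 2) ^ 2 := by rw [ha]; ring
  simp only [Fin.sum_univ_three]
  rw [h10, h20, h21]
  constructor
  · nlinarith [sq_nonneg (A 0 1), sq_nonneg (A 0 2), sq_nonneg (A 1 2),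
      sq_nonneg (A 1 1 - A 2 2)]
  · constructor
    · intro h
      have key : A 0 1 ^ 2 + A 0 2 ^ 2 + 4 * A 1 2 ^ 2 + (A 1 1 - A 2 2) ^ 2 = 0 := by
        linear_combination 2 * h + hsq
      have hb : A 0 1 ^ 2 = 0 := by
        linarith [key, sq_nonneg (A 0 1), sq_nonneg (A 0 2), sq_nonneg (A 1 2), sq_nonneg (A 1 1 - A 2 2)]
      have hc : A 0 2 ^ 2 = 0 := by
        linarith [key, sq_nonneg (A 0 1), sq_nonneg (A 0 2), sq_nonneg (A 1 2), sq_nonneg (A 1 1 - A 2 2)]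
      have he : A 1 2 ^ 2 = 0 := by
        linarith [key, sq_nonneg (A 0 1), sq_nonneg (A 0 2), sq_nonneg (A 1 2), sq_nonneg (A 1 1 - A 2 2)]
      have hdf : (A 1 1 - A 2 2) ^ 2 = 0 := by
        linarith [key, sq_nonneg (A 0 1), sq_nonneg (A 0 2), sq_nonneg (A 1 2), sq_nonneg (A 1 1 - A 2 2)]
      have hb' := pow_eq_zero_iff (n := 2) (by norm_num) |>.mp hb
      have hc' := pow_eq_zero_iff (n := 2) (by norm_num) |>.mp hc
      have he' := pow_eq_zero_iff (n := 2) (by norm_num) |>.mp he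
      have hdf' : A 1 1 - A 2 2 = 0 := pow_eq_zero_iff (n := 2) (by norm_num) |>.mp hdf
      exact ⟨hb', hc', he', by linarith, by linarith⟩
    · rintro ⟨h1, h2, h3, h4, h5⟩
      rw [h1, h2, h3, h4, h5]
      ring
end
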